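/- arXiv:2006.05237 — 3 statements merged into one kernel-verified Lean document; each statement's English description precedes it below -/
import Mathlib

section
/- Let A be an associative ℂ-algebra generated by elements θ¹, θ², θ³ satisfying the ternary relations θⁱθʲθᵏ = q·θʲθᵏθⁱ for all i, j, k ∈ {1,2,3}, where q = exp(2πi/3). Then any product of four generators vanishes: θⁱθʲθᵏθˡ = 0 for all i, j, k, l. -/
/-! The ternary relation cycles any three adjacent generators at the cost of a factor `q`.
Cycling the first three and then the last three letters of `θⁱθʲθᵏθˡ` gives `q² θʲθⁱθˡθᵏ`,
and doing this twice returns to the original monomial, so `θⁱθʲθᵏθˡ = q⁴ θⁱθʲθᵏθˡ`.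
Since `q` is a primitive cube root of unity, `q⁴ = q ≠ 1`, and the monomial vanishes. -/

noncomputable def q : ℂ := Complex.exp (2 * Real.pi * Complex.I / 3)

section TernaryCyclic

variable {R A ι : Type*} [CommSemiring R] [Semiring A] [Algebra R A] {c : R} {θ : ι → A}

theorem mul_mul_mul_eq_sq_smul_of_cyclic
    (h : ∀ i j k, θ i * θ j * θ k = c • (θ j * θ k * θ i)) (i j k l : ι) :
    θ i * θ j * θ k * θ l = c ^ 2 • (θ j * θ i * θ l * θ k) := by
  calc θ i * θ j * θ k * θ l = c • (θ j * (θ k * θ i * θ l)) := by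
        rw [h i j k, smul_mul_assoc, mul_assoc (θ j), mul_assoc (θ j)]
    _ = c ^ 2 • (θ j * θ i * θ l * θ k) := by
        rw [h k i l, mul_smul_comm, smul_smul, sq, mul_assoc (θ j), mul_assoc (θ j)]

theorem mul_mul_mul_eq_pow_four_smul_of_cyclic
    (h : ∀ i j k, θ i * θ j * θ k = c • (θ j * θ k * θ i)) (i j k l : ι) :
    θ i * θ j * θ k * θ l = c ^ 4 • (θ i * θ j * θ k * θ l) := by
  conv_lhs => rw [mul_mul_mul_eq_sq_smul_of_cyclic h i, mul_mul_mul_eq_sq_smul_of_cyclic h j]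
  rw [smul_smul, ← pow_add]

end TernaryCyclic

theorem eq_zero_of_smul_eq_self {K M : Type*} [DivisionRing K] [AddCommGroup M] [Module K M] {c : K}
    (hc : c ≠ 1) {x : M} (h : c • x = x) : x = 0 := by
  by_contra hx
  exact hc (smul_left_injective K hx (by simpa using h))

theorem isPrimitiveRoot_q : IsPrimitiveRoot q 3 := by
  simpa [q] using Complex.isPrimitiveRoot_exp 3 three_ne_zero

theorem q_pow_four_ne_one : q ^ 4 ≠ 1 := by
  rw [Ne, isPrimitiveRoot_q.pow_eq_one_iff_dvd]
  norm_num

theorem stmt3 {A : Type*} [Ring A] [Algebra ℂ A] (θ : Fin 3 → A)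
    (h : ∀ i j k : Fin 3, θ i * θ j * θ k = q • (θ j * θ k * θ i)) :
    ∀ i j k l : Fin 3, θ i * θ j * θ k * θ l = 0 := fun i j k l =>
  eq_zero_of_smul_eq_self q_pow_four_ne_one
    (mul_mul_mul_eq_pow_four_smul_of_cyclic h i j k l).symm
end

section
/- The space of rank-3 tensors t : Fin 3 → Fin 3 → Fin 3 → ℂ satisfying (a) t_{ijk} + t_{jki} + t_{kij} = 0 for all i,j,k, and (b) all three partial traces vanish: Σ_i t_{iij} = Σ_i t_{iji} = Σ_i t_{jii} = 0 for each j, is a complex vector space of dimension 10. -/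
/-- The subspace of rank-3 tensors `t` with `t_{ijk} + t_{jki} + t_{kij} = 0` and all
three partial traces vanishing. -/
noncomputable def weight2Space : Submodule ℂ (Fin 3 → Fin 3 → Fin 3 → ℂ) where
  carrier := {t | (∀ i j k : Fin 3, t i j k + t j k i + t k i j = 0) ∧
    ∀ j : Fin 3, (∑ i : Fin 3, t i i j = 0) ∧ (∑ i : Fin 3, t i j i = 0) ∧
      (∑ i : Fin 3, t j i i = 0)}
  add_mem' := by
    rintro a b ⟨ha1, ha2⟩ ⟨hb1, hb2⟩
    constructor
    · intro i j k
      have := ha1 i j k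
      have := hb1 i j k
      simp only [Pi.add_apply]
      linear_combination ha1 i j k + hb1 i j k
    · intro j
      obtain ⟨ha21, ha22, ha23⟩ := ha2 j
      obtain ⟨hb21, hb22, hb23⟩ := hb2 j
      refine ⟨?_, ?_, ?_⟩ <;> simp only [Pi.add_apply, Finset.sum_add_distrib]
      · rw [ha21, hb21]; ring
      · rw [ha22, hb22]; ring
      · rw [ha23, hb23]; ring
  zero_mem' := by
    constructor
    · intro i j k; simp
    · intro j; simp
  smul_mem' := by
    rintro c t ⟨h1, h2⟩
    constructor
    · intro i j k
      simp only [Pi.smul_apply, smul_eq_mul]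
      linear_combination c * h1 i j k
    · intro j
      obtain ⟨h21, h22, h23⟩ := h2 j
      refine ⟨?_, ?_, ?_⟩ <;>
        simp only [Pi.smul_apply, smul_eq_mul, ← Finset.mul_sum]
      · rw [h21]; ring
      · rw [h22]; ring
      · rw [h23]; ring

/-- Reconstruct a tensor from 10 free coordinates. -/
noncomputable def recon (v : Fin 10 → ℂ) : Fin 3 → Fin 3 → Fin 3 → ℂ :=
  ![![![0, -v 9, v 2 + v 6], ![-v 7, v 4 + v 8, -v 1 - v 3], ![-v 2, -v 0 - v 5, -v 4 - v 8]],
    ![![v 7 + v 9, -v 4, v 0], ![-v 8, 0, -v 2 - v 6], ![v 1, v 2, -v 7 - v 9]],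
    ![![-v 6, v 3, v 4], ![v 5, v 6, v 7], ![v 8, v 9, 0]]]

/-- Extract the 10 free coordinates of a tensor. -/
noncomputable def coords (t : Fin 3 → Fin 3 → Fin 3 → ℂ) : Fin 10 → ℂ :=
  ![t 1 0 2, t 1 2 0, t 1 2 1, t 2 0 1, t 2 0 2, t 2 1 0, t 2 1 1, t 2 1 2, t 2 2 0, t 2 2 1]

theorem recon_add (v w : Fin 10 → ℂ) : recon (v + w) = recon v + recon w := by
  have hv : ∀ m, (v + w) m = v m + w m := fun m => rfl
  funext i j k
  have h : (recon v + recon w) i j k = recon v i j k + recon w i j k := rfl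
  rw [h]
  fin_cases i <;> fin_cases j <;> fin_cases k <;> simp [recon, hv] <;> ring

theorem recon_smul (c : ℂ) (v : Fin 10 → ℂ) : recon (c • v) = c • recon v := by
  have hv : ∀ m, (c • v) m = c * v m := fun m => rfl
  funext i j k
  have h : (c • recon v) i j k = c * recon v i j k := rfl
  rw [h]
  fin_cases i <;> fin_cases j <;> fin_cases k <;> simp [recon, hv] <;> ring

noncomputable def reconL0 : (Fin 10 → ℂ) →ₗ[ℂ] (Fin 3 → Fin 3 → Fin 3 → ℂ) where
  toFun := recon
  map_add' := recon_add
  map_smul' := recon_smul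

noncomputable def coordsL0 : (Fin 3 → Fin 3 → Fin 3 → ℂ) →ₗ[ℂ] (Fin 10 → ℂ) where
  toFun := coords
  map_add' t s := by funext m; fin_cases m <;> rfl
  map_smul' c t := by funext m; fin_cases m <;> rfl

theorem recon_mem (v : Fin 10 → ℂ) : recon v ∈ weight2Space := by
  constructor
  · intro i j k
    fin_cases i <;> fin_cases j <;> fin_cases k <;> simp [recon] <;> ring
  · intro j
    fin_cases j <;>
      refine ⟨?_, ?_, ?_⟩ <;> simp [recon, Fin.sum_univ_three] <;> ring

theorem recon_coords (t : Fin 3 → Fin 3 → Fin 3 → ℂ) (ht : t ∈ weight2Space) :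
    recon (coords t) = t := by
  obtain ⟨hc, htr⟩ := ht
  have hta : ∀ j : Fin 3, t 0 0 j + t 1 1 j + t 2 2 j = 0 := fun j => by
    have := (htr j).1; simpa [Fin.sum_univ_three] using this
  have htb : ∀ j : Fin 3, t 0 j 0 + t 1 j 1 + t 2 j 2 = 0 := fun j => by
    have := (htr j).2.1; simpa [Fin.sum_univ_three] using this
  have e0 : coords t 0 = t 1 0 2 := rfl
  have e1 : coords t 1 = t 1 2 0 := rfl
  have e2 : coords t 2 = t 1 2 1 := rfl
  have e3 : coords t 3 = t 2 0 1 := rfl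
  have e4 : coords t 4 = t 2 0 2 := rfl
  have e5 : coords t 5 = t 2 1 0 := rfl
  have e6 : coords t 6 = t 2 1 1 := rfl
  have e7 : coords t 7 = t 2 1 2 := rfl
  have e8 : coords t 8 = t 2 2 0 := rfl
  have e9 : coords t 9 = t 2 2 1 := rfl
  funext i j k
  fin_cases i <;> fin_cases j <;> fin_cases k <;>
    simp [recon, e0, e1, e2, e3, e4, e5, e6, e7, e8, e9] <;>
    first
    | linear_combination (-1/3 : ℂ) * hc 0 0 0
    | linear_combination (1/3 : ℂ) * hc 0 0 0
    | linear_combination (1/3 : ℂ) * hc 1 1 1 + (-1 : ℂ) * hta 1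
    | linear_combination (-1/3 : ℂ) * hc 1 1 1 + (1 : ℂ) * hta 1
    | linear_combination (1 : ℂ) * hc 1 1 2 + (1/3 : ℂ) * hc 2 2 2 + (-1 : ℂ) * hta 2
    | linear_combination (-1 : ℂ) * hc 1 1 2 + (-1/3 : ℂ) * hc 2 2 2 + (1 : ℂ) * hta 2
    | linear_combination (1/3 : ℂ) * hc 1 1 1 + (-1 : ℂ) * htb 1
    | linear_combination (-1/3 : ℂ) * hc 1 1 1 + (1 : ℂ) * htb 1
    | linear_combination (-2/3 : ℂ) * hc 0 0 0 + (-1 : ℂ) * hc 0 1 1 + (1 : ℂ) * hta 0 + (1 : ℂ) * htb 0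
    | linear_combination (2/3 : ℂ) * hc 0 0 0 + (1 : ℂ) * hc 0 1 1 + (-1 : ℂ) * hta 0 + (-1 : ℂ) * htb 0
    | linear_combination (-1 : ℂ) * hc 0 1 2
    | linear_combination (1 : ℂ) * hc 0 1 2
    | linear_combination (1/3 : ℂ) * hc 2 2 2 + (-1 : ℂ) * htb 2
    | linear_combination (-1/3 : ℂ) * hc 2 2 2 + (1 : ℂ) * htb 2
    | linear_combination (-1 : ℂ) * hc 0 2 1
    | linear_combination (1 : ℂ) * hc 0 2 1
    | linear_combination (-1 : ℂ) * hc 0 2 2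
    | linear_combination (1 : ℂ) * hc 0 2 2
    | linear_combination (-1 : ℂ) * hc 0 0 1 + (-2/3 : ℂ) * hc 1 1 1 + (1 : ℂ) * hta 1 + (1 : ℂ) * htb 1
    | linear_combination (1 : ℂ) * hc 0 0 1 + (2/3 : ℂ) * hc 1 1 1 + (-1 : ℂ) * hta 1 + (-1 : ℂ) * htb 1
    | linear_combination (1/3 : ℂ) * hc 0 0 0 + (-1 : ℂ) * htb 0
    | linear_combination (-1/3 : ℂ) * hc 0 0 0 + (1 : ℂ) * htb 0
    | linear_combination (1/3 : ℂ) * hc 0 0 0 + (-1 : ℂ) * hta 0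
    | linear_combination (-1/3 : ℂ) * hc 0 0 0 + (1 : ℂ) * hta 0
    | linear_combination (-1/3 : ℂ) * hc 1 1 1
    | linear_combination (1/3 : ℂ) * hc 1 1 1
    | linear_combination (-1 : ℂ) * hc 1 1 2
    | linear_combination (1 : ℂ) * hc 1 1 2
    | linear_combination (-1 : ℂ) * hc 1 2 2
    | linear_combination (1 : ℂ) * hc 1 2 2
    | linear_combination (-1 : ℂ) * hc 0 0 2 + (-1 : ℂ) * hc 1 1 2 + (-2/3 : ℂ) * hc 2 2 2 + (1 : ℂ) * hta 2 + (1 : ℂ) * htb 2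
    | linear_combination (1 : ℂ) * hc 0 0 2 + (1 : ℂ) * hc 1 1 2 + (2/3 : ℂ) * hc 2 2 2 + (-1 : ℂ) * hta 2 + (-1 : ℂ) * htb 2
    | linear_combination (-1/3 : ℂ) * hc 2 2 2
    | linear_combination (1/3 : ℂ) * hc 2 2 2

theorem coords_recon (v : Fin 10 → ℂ) : coords (recon v) = v := by
  funext m; fin_cases m <;> rfl

noncomputable def reconL : (Fin 10 → ℂ) →ₗ[ℂ] weight2Space :=
  reconL0.codRestrict weight2Space recon_mem

noncomputable def coordsL : weight2Space →ₗ[ℂ] (Fin 10 → ℂ) :=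
  coordsL0.comp weight2Space.subtype

noncomputable def weight2Equiv : (Fin 10 → ℂ) ≃ₗ[ℂ] weight2Space :=
  LinearEquiv.ofLinear reconL coordsL
    (by
      apply LinearMap.ext
      intro t
      apply Subtype.ext
      exact recon_coords t.1 t.2)
    (by
      apply LinearMap.ext
      intro v
      exact coords_recon v)

theorem stmt14 : Module.finrank ℂ weight2Space = 10 := by
  rw [← weight2Equiv.finrank_eq]
  simp
end

section
/- Let A be the free associative ℂ-algebra on θ¹, θ², θ³ modulo the ternary relations θⁱθʲθᵏ = q·θʲθᵏθⁱ (q = exp(2πi/3)) for all i,j,k, and the binary relation (θ¹)² + (θ²)² + (θ³)² = 0. Then the subspace spanned by degree-2 monomials θⁱθʲ has dimension 8. -/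
/-- The defining relations of the `q`-algebra: the ternary relations
`θⁱθʲθᵏ = q·θʲθᵏθⁱ` and the binary relation `(θ¹)² + (θ²)² + (θ³)² = 0`. -/
inductive qRel : FreeAlgebra ℂ (Fin 3) → FreeAlgebra ℂ (Fin 3) → Prop
  | ternary (i j k : Fin 3) :
      qRel (FreeAlgebra.ι ℂ i * FreeAlgebra.ι ℂ j * FreeAlgebra.ι ℂ k)
        (q • (FreeAlgebra.ι ℂ j * FreeAlgebra.ι ℂ k * FreeAlgebra.ι ℂ i))
  | binary : qRel (∑ i : Fin 3, FreeAlgebra.ι ℂ i * FreeAlgebra.ι ℂ i) 0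

/-- The `q`-algebra: the free algebra on three generators modulo the relations. -/
noncomputable abbrev QAlgebra : Type := RingQuot qRel

/-- The generators of the `q`-algebra. -/
noncomputable def θ (i : Fin 3) : QAlgebra :=
  RingQuot.mkAlgHom ℂ qRel (FreeAlgebra.ι ℂ i)


/-!
The binary relation rewrites `θ₂θ₂` as `-(θ₀θ₀ + θ₁θ₁)`, so the other eight monomials span.
They are independent because every family `β i j` with `∑ β i i = 0` is realised: let the
generators act on `ℂ ⊕ ℂ³ ⊕ W` by `1 ↦ eᵢ`, `eⱼ ↦ β i j`, `W ↦ 0`. Cubic products vanish, so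
the ternary relations hold whatever `q` is, and `θᵢθⱼ` sends `1` to `β i j`. Taking for `β` the
matrix units reduced by `M ↦ M - M₂₂ • 1` separates the eight monomials.
-/

section TruncatedRepresentation

variable {W : Type*} [AddCommGroup W] [Module ℂ W] (β : Fin 3 → Fin 3 → W)

def truncGen (i : Fin 3) : Module.End ℂ (ℂ × (Fin 3 → ℂ) × W) where
  toFun x := (0, x.1 • Pi.single i 1, Fintype.linearCombination ℂ (β i) x.2.1)
  map_add' x y := by simp [add_smul]
  map_smul' c x := by simp [smul_smul]

theorem truncGen_apply (i : Fin 3) (x : ℂ × (Fin 3 → ℂ) × W) :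
    truncGen β i x = (0, x.1 • Pi.single i 1, Fintype.linearCombination ℂ (β i) x.2.1) :=
  rfl

theorem truncGen_mul_mul (i j k : Fin 3) : truncGen β i * truncGen β j * truncGen β k = 0 := by
  ext x <;> simp [truncGen_apply]

theorem truncGen_truncGen_apply (i j : Fin 3) (x : ℂ × (Fin 3 → ℂ) × W) :
    truncGen β i (truncGen β j x) = (0, 0, x.1 • β i j) := by
  simp [truncGen_apply, Fintype.linearCombination_apply, Pi.single_apply]

variable {β}

theorem sum_truncGen_mul_self (hβ : ∑ i, β i i = 0) :
    ∑ i, truncGen β i * truncGen β i = 0 := by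
  refine LinearMap.ext fun x => ?_
  simp only [LinearMap.sum_apply, Module.End.mul_apply, truncGen_truncGen_apply]
  ext <;> simp [Prod.fst_sum, Prod.snd_sum, ← Finset.smul_sum, hβ]

def truncRep (hβ : ∑ i, β i i = 0) : QAlgebra →ₐ[ℂ] Module.End ℂ (ℂ × (Fin 3 → ℂ) × W) :=
  RingQuot.liftAlgHom ℂ ⟨FreeAlgebra.lift ℂ (truncGen β), fun _ _ h => by
    induction h with
    | ternary i j k => simp [truncGen_mul_mul]
    | binary => simpa using sum_truncGen_mul_self hβ⟩

theorem truncRep_θ (hβ : ∑ i, β i i = 0) (i : Fin 3) : truncRep hβ (θ i) = truncGen β i := by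
  simp [truncRep, θ]

def quadraticCoeff (hβ : ∑ i, β i i = 0) : QAlgebra →ₗ[ℂ] W :=
  (LinearMap.snd ℂ _ W ∘ₗ LinearMap.snd ℂ ℂ _) ∘ₗ LinearMap.applyₗ (1, 0, 0) ∘ₗ
    (truncRep hβ).toLinearMap

theorem quadraticCoeff_θ_mul_θ (hβ : ∑ i, β i i = 0) (i j : Fin 3) :
    quadraticCoeff hβ (θ i * θ j) = β i j := by
  simp [quadraticCoeff, truncRep_θ, truncGen_truncGen_apply]

end TruncatedRepresentation

theorem θ_two_mul_θ_two : θ 2 * θ 2 = -(θ 0 * θ 0 + θ 1 * θ 1) := by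
  have h : ∑ i, θ i * θ i = 0 := by simpa [θ] using RingQuot.mkAlgHom_rel ℂ qRel.binary
  rw [Fin.sum_univ_three, add_comm] at h
  exact eq_neg_of_add_eq_zero_left h

noncomputable def offCornerMonomial (p : {p : Fin 3 × Fin 3 // p ≠ (2, 2)}) : QAlgebra :=
  θ p.1.1 * θ p.1.2

theorem span_θ_mul_θ_eq_span_offCornerMonomial :
    Submodule.span ℂ {x : QAlgebra | ∃ i j : Fin 3, x = θ i * θ j} =
      Submodule.span ℂ (Set.range offCornerMonomial) := by
  have mem : ∀ p : Fin 3 × Fin 3, p ≠ (2, 2) →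
      θ p.1 * θ p.2 ∈ Submodule.span ℂ (Set.range offCornerMonomial) :=
    fun p hp => Submodule.subset_span ⟨⟨p, hp⟩, rfl⟩
  refine le_antisymm (Submodule.span_le.2 ?_) (Submodule.span_mono ?_)
  · rintro x ⟨i, j, rfl⟩
    by_cases hij : (i, j) = (2, 2)
    · obtain ⟨rfl, rfl⟩ := Prod.ext_iff.1 hij
      rw [SetLike.mem_coe, θ_two_mul_θ_two]
      exact neg_mem (add_mem (mem (0, 0) (by decide)) (mem (1, 1) (by decide)))
    · exact mem (i, j) hij
  · rintro x ⟨p, rfl⟩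
    exact ⟨p.1.1, p.1.2, rfl⟩

/-- The matrix unit `Eᵢⱼ` reduced by `M ↦ M - M₂₂ • 1`. -/
def cornerReduction (i j : Fin 3) : Fin 3 × Fin 3 → ℂ :=
  Pi.single (i, j) 1 - if (i, j) = (2, 2) then ∑ k, Pi.single (k, k) 1 else 0

theorem sum_cornerReduction_self : ∑ i, cornerReduction i i = 0 := by
  simp [cornerReduction, Finset.sum_sub_distrib]

theorem linearIndependent_offCornerMonomial : LinearIndependent ℂ offCornerMonomial := by
  apply LinearIndependent.of_comp (quadraticCoeff sum_cornerReduction_self)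
  have h : quadraticCoeff sum_cornerReduction_self ∘ offCornerMonomial =
      Pi.basisFun ℂ (Fin 3 × Fin 3) ∘ Subtype.val := by
    funext p
    simp [offCornerMonomial, quadraticCoeff_θ_mul_θ, cornerReduction, p.2]
  rw [h]
  exact (Pi.basisFun ℂ _).linearIndependent.comp _ Subtype.val_injective

theorem stmt18 :
    Module.finrank ℂ
      (Submodule.span ℂ {x : QAlgebra | ∃ i j : Fin 3, x = θ i * θ j}) = 8 := by
  rw [span_θ_mul_θ_eq_span_offCornerMonomial,
    finrank_span_eq_card linearIndependent_offCornerMonomial]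
  rfl
end
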